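/- Let d ≥ 1, τ > 0, and let x_1, …, x_k ∈ ℝ^d with ‖x_s‖_2 ≤ 1 for all s ∈ [k]. Set V_s = τ·I_d + Σ_{t=1}^{s} x_t x_tᵀ. For any subset J ⊆ [k], let W = τ·I_d + Σ_{s∈J} x_s x_sᵀ. Then (i) det(W) ≥ τ^d · Π_{s∈J} (1 + x_sᵀ V_{s-1}^{-1} x_s), and (ii) det(W) ≤ ((d·τ + |J|)/d)^d. -/

import Mathlib

/-!
Adding the rank-one terms of `J` one at a time in increasing order, the matrix determinant lemma
multiplies the determinant by `1 + xₛᵀ A⁻¹ xₛ`, where `A` is the partial sum so far. Since `A` is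
dominated by `V (s - 1)` in the Loewner order and inversion is antitone there, each factor is at
least `1 + xₛᵀ V (s - 1)⁻¹ xₛ`. For the upper bound, AM-GM on the eigenvalues of the positive
semidefinite `W` gives `det W ≤ (tr W / d) ^ d`, and `tr W = d τ + ∑ ‖xₛ‖² ≤ d τ + |J|`.
-/

open Matrix Finset

namespace Real

theorem prod_le_sum_div_card_pow {ι : Type*} (s : Finset ι) {f : ι → ℝ}
    (hf : ∀ i ∈ s, 0 ≤ f i) : ∏ i ∈ s, f i ≤ ((∑ i ∈ s, f i) / #s) ^ #s := by
  rcases s.eq_empty_or_nonempty with rfl | hs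
  · simp
  have hcard : (#s : ℝ) ≠ 0 := by simp [hs.ne_empty]
  have amgm := geom_mean_le_arith_mean_weighted s (fun _ ↦ (#s : ℝ)⁻¹) f
    (fun _ _ ↦ by positivity) (by simp [hcard]) hf
  rw [← mul_sum, inv_mul_eq_div] at amgm
  calc ∏ i ∈ s, f i = (∏ i ∈ s, f i ^ (#s : ℝ)⁻¹) ^ #s := by
        rw [← prod_pow]
        refine prod_congr rfl fun i hi ↦ ?_
        rw [← rpow_mul_natCast (hf i hi), inv_mul_cancel₀ hcard, rpow_one]
    _ ≤ ((∑ i ∈ s, f i) / #s) ^ #s :=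
        pow_le_pow_left₀ (prod_nonneg fun i hi ↦ rpow_nonneg (hf i hi) _) amgm _

end Real

namespace Matrix

variable {n : Type*} [Fintype n]

theorem det_add_vecMulVec [DecidableEq n] {α : Type*} [CommRing α] {A : Matrix n n α}
    (hA : IsUnit A.det) (u v : n → α) :
    (A + vecMulVec u v).det = A.det * (1 + v ⬝ᵥ A⁻¹ *ᵥ u) := by
  rw [vecMulVec_eq Unit, det_add_replicateCol_mul_replicateRow hA, det_unique (n := Unit),
    dotProduct_mulVec]
  simp [mul_apply, vecMul, dotProduct]

theorem posSemidef_sum_vecMulVec_self {ι : Type*} (s : Finset ι) (v : ι → n → ℝ) :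
    (∑ i ∈ s, vecMulVec (v i) (v i)).PosSemidef :=
  posSemidef_sum s fun i _ ↦ posSemidef_vecMulVec_self_star (v i)

theorem posSemidef_sum_vecMulVec_self_sub_of_subset {ι : Type*} {s t : Finset ι} (hst : s ⊆ t)
    (v : ι → n → ℝ) :
    (∑ i ∈ t, vecMulVec (v i) (v i) - ∑ i ∈ s, vecMulVec (v i) (v i)).PosSemidef := by
  classical
  rw [← sum_sdiff hst, add_sub_cancel_right]
  exact posSemidef_sum_vecMulVec_self _ v

theorem PosSemidef.det_le_trace_div_card_pow [DecidableEq n] {A : Matrix n n ℝ}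
    (hA : A.PosSemidef) :
    A.det ≤ (A.trace / Fintype.card n) ^ Fintype.card n := by
  rw [hA.isHermitian.det_eq_prod_eigenvalues, hA.isHermitian.trace_eq_sum_eigenvalues]
  simpa using Real.prod_le_sum_div_card_pow univ fun i _ ↦ hA.eigenvalues_nonneg i

-- `x ⬝ᵥ A⁻¹ *ᵥ x` is the maximum of the concave quadratic `v ↦ 2 v ⬝ᵥ x - v ⬝ᵥ A *ᵥ v`,
-- attained at `v = A⁻¹ *ᵥ x`; the gap is `(v - A⁻¹ *ᵥ x) ⬝ᵥ A *ᵥ (v - A⁻¹ *ᵥ x)`.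
theorem PosDef.two_mul_dotProduct_sub_le_dotProduct_inv_mulVec [DecidableEq n] {A : Matrix n n ℝ}
    (hA : A.PosDef) (x v : n → ℝ) : 2 * (v ⬝ᵥ x) - v ⬝ᵥ A *ᵥ v ≤ x ⬝ᵥ A⁻¹ *ᵥ x := by
  set u := A⁻¹ *ᵥ x
  have hAu : A *ᵥ u = x := by
    rw [mulVec_mulVec, mul_nonsing_inv A hA.det_pos.ne'.isUnit, one_mulVec]
  have hsymm : u ⬝ᵥ A *ᵥ v = v ⬝ᵥ x := by
    rw [dotProduct_mulVec, ← mulVec_transpose, (isHermitian_iff_isSymm.mp hA.isHermitian).eq,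
      hAu, dotProduct_comm]
  have hsq := hA.posSemidef.dotProduct_mulVec_nonneg (v - u)
  simp only [star_trivial, mulVec_sub, dotProduct_sub, sub_dotProduct, hAu, hsymm] at hsq
  rw [dotProduct_comm x u]
  linarith

theorem PosDef.dotProduct_inv_mulVec_le_of_posSemidef_sub [DecidableEq n] {A B : Matrix n n ℝ}
    (hA : A.PosDef) (hAB : (B - A).PosSemidef) (x : n → ℝ) :
    x ⬝ᵥ B⁻¹ *ᵥ x ≤ x ⬝ᵥ A⁻¹ *ᵥ x := by
  have hB : B.PosDef := by simpa using hA.add_posSemidef hAB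
  set v := B⁻¹ *ᵥ x
  have hBv : B *ᵥ v = x := by
    rw [mulVec_mulVec, mul_nonsing_inv B hB.det_pos.ne'.isUnit, one_mulVec]
  have hgap := hAB.dotProduct_mulVec_nonneg v
  simp only [star_trivial, sub_mulVec, dotProduct_sub, hBv] at hgap
  have := hA.two_mul_dotProduct_sub_le_dotProduct_inv_mulVec x v
  rw [dotProduct_comm x v]
  linarith

theorem PosDef.det_mul_prod_le_det_add_sum_vecMulVec [DecidableEq n] {ι : Type*} [LinearOrder ι]
    {A : Matrix n n ℝ} (hA : A.PosDef) (x : ι → n → ℝ) (P : ι → Matrix n n ℝ) (J : Finset ι)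
    (hP : ∀ s ∈ J, (P s - (A + ∑ t ∈ J with t < s, vecMulVec (x t) (x t))).PosSemidef) :
    A.det * ∏ s ∈ J, (1 + x s ⬝ᵥ (P s)⁻¹ *ᵥ x s) ≤ (A + ∑ s ∈ J, vecMulVec (x s) (x s)).det := by
  induction J using Finset.induction_on_max with
  | empty => simp
  | insert a J hlt ih =>
    have ha : a ∉ J := fun h ↦ (hlt a h).false
    set B := A + ∑ t ∈ J, vecMulVec (x t) (x t)
    have hB : B.PosDef := hA.add_posSemidef (posSemidef_sum_vecMulVec_self J x)
    have hPa : (P a - B).PosSemidef := by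
      have hJa : {t ∈ insert a J | t < a} = J := by
        rw [filter_insert, if_neg (lt_irrefl a)]
        exact filter_true_of_mem hlt
      simpa [hJa] using hP a (mem_insert_self a J)
    have hPJ : ∀ s ∈ J, (P s - (A + ∑ t ∈ J with t < s, vecMulVec (x t) (x t))).PosSemidef := by
      intro s hs
      have hJs : {t ∈ insert a J | t < s} = {t ∈ J | t < s} := by
        rw [filter_insert, if_neg (hlt s hs).asymm]
      simpa [hJs] using hP s (mem_insert_of_mem hs)
    have hPa_pos : (P a).PosDef := by simpa using hB.add_posSemidef hPa
    have hquad_nonneg : 0 ≤ x a ⬝ᵥ (P a)⁻¹ *ᵥ x a := by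
      simpa using hPa_pos.inv.posSemidef.dotProduct_mulVec_nonneg (x a)
    have hquad_le := hB.dotProduct_inv_mulVec_le_of_posSemidef_sub hPa (x a)
    have hsum : A + ∑ t ∈ insert a J, vecMulVec (x t) (x t) = B + vecMulVec (x a) (x a) := by
      rw [sum_insert ha, add_left_comm, add_comm]
    rw [prod_insert ha, hsum, det_add_vecMulVec hB.det_pos.ne'.isUnit]
    calc A.det * ((1 + x a ⬝ᵥ (P a)⁻¹ *ᵥ x a) * ∏ s ∈ J, (1 + x s ⬝ᵥ (P s)⁻¹ *ᵥ x s))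
        = (A.det * ∏ s ∈ J, (1 + x s ⬝ᵥ (P s)⁻¹ *ᵥ x s)) * (1 + x a ⬝ᵥ (P a)⁻¹ *ᵥ x a) := by
          ring
      _ ≤ B.det * (1 + x a ⬝ᵥ B⁻¹ *ᵥ x a) :=
          mul_le_mul (ih hPJ) (by linarith) (by linarith) hB.det_pos.le

end Matrix

theorem EuclideanSpace.dotProduct_self_eq_norm_sq {ι : Type*} [Fintype ι]
    (v : EuclideanSpace ℝ ι) : v.ofLp ⬝ᵥ v.ofLp = ‖v‖ ^ 2 := by
  rw [← real_inner_self_eq_norm_sq, EuclideanSpace.inner_eq_star_dotProduct, star_trivial]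

theorem det_bounds_elliptical_potential_general
    (d k : ℕ) (τ : ℝ) (hτ : 0 < τ)
    (x : ℕ → EuclideanSpace ℝ (Fin d))
    (hx : ∀ s ∈ Finset.Icc 1 k, ‖x s‖ ≤ 1)
    (V : ℕ → Matrix (Fin d) (Fin d) ℝ)
    (hV : ∀ s, V s = τ • (1 : Matrix (Fin d) (Fin d) ℝ)
        + ∑ t ∈ Finset.Icc 1 s, Matrix.vecMulVec (x t) (x t))
    (J : Finset ℕ) (hJ : J ⊆ Finset.Icc 1 k)
    (W : Matrix (Fin d) (Fin d) ℝ)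
    (hW : W = τ • (1 : Matrix (Fin d) (Fin d) ℝ)
        + ∑ s ∈ J, Matrix.vecMulVec (x s) (x s)) :
    τ ^ d * ∏ s ∈ J, (1 + x s ⬝ᵥ (V (s - 1))⁻¹ *ᵥ x s) ≤ W.det ∧
    W.det ≤ ((d * τ + J.card) / d) ^ d := by
  have hτI : (τ • (1 : Matrix (Fin d) (Fin d) ℝ)).PosDef := PosDef.one.smul hτ
  constructor
  · have hdet : (τ • (1 : Matrix (Fin d) (Fin d) ℝ)).det = τ ^ d := by simp
    rw [hW, ← hdet]
    refine hτI.det_mul_prod_le_det_add_sum_vecMulVec _ _ J fun s hs ↦ ?_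
    have hprefix : {t ∈ J | t < s} ⊆ Icc 1 (s - 1) := fun t ht ↦ by
      rw [mem_filter] at ht
      have := mem_Icc.mp (hJ ht.1)
      exact mem_Icc.mpr ⟨this.1, by omega⟩
    rw [hV, add_sub_add_left_eq_sub]
    exact posSemidef_sum_vecMulVec_self_sub_of_subset hprefix _
  · have hpsd : W.PosSemidef := hW ▸ hτI.posSemidef.add (posSemidef_sum_vecMulVec_self J _)
    have htrace : W.trace ≤ d * τ + #J := by
      have hnorm : ∑ s ∈ J, ‖x s‖ ^ 2 ≤ #J := by
        simpa using sum_le_sum fun s hs ↦ pow_le_one₀ (norm_nonneg _) (hx s (hJ hs))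
      simpa [hW, trace_sum, EuclideanSpace.dotProduct_self_eq_norm_sq, mul_comm] using hnorm
    calc W.det ≤ (W.trace / d) ^ d := by simpa using hpsd.det_le_trace_div_card_pow
      _ ≤ ((d * τ + #J) / d) ^ d := pow_le_pow_left₀ (by have := hpsd.trace_nonneg; positivity)
          (div_le_div_of_nonneg_right htrace d.cast_nonneg) d

/-- Determinant bounds used in the proof of the elliptical potential count lemma:
for any `J ⊆ [k]` and `W = τ • I + ∑_{s ∈ J} x s (x s)ᵀ`,
(i) `det W ≥ τ^d · ∏_{s ∈ J} (1 + (x s)ᵀ (V (s-1))⁻¹ (x s))`, and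
(ii) `det W ≤ ((d·τ + |J|)/d)^d`. -/
theorem det_bounds_elliptical_potential
    (d k : ℕ) (hd : 1 ≤ d) (τ : ℝ) (hτ : 0 < τ)
    (x : ℕ → EuclideanSpace ℝ (Fin d))
    (hx : ∀ s ∈ Finset.Icc 1 k, ‖x s‖ ≤ 1)
    (V : ℕ → Matrix (Fin d) (Fin d) ℝ)
    (hV : ∀ s, V s = τ • (1 : Matrix (Fin d) (Fin d) ℝ)
        + ∑ t ∈ Finset.Icc 1 s, Matrix.vecMulVec (x t) (x t))
    (J : Finset ℕ) (hJ : J ⊆ Finset.Icc 1 k)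
    (W : Matrix (Fin d) (Fin d) ℝ)
    (hW : W = τ • (1 : Matrix (Fin d) (Fin d) ℝ)
        + ∑ s ∈ J, Matrix.vecMulVec (x s) (x s)) :
    τ ^ d * ∏ s ∈ J, (1 + x s ⬝ᵥ (V (s - 1))⁻¹ *ᵥ x s) ≤ W.det ∧
    W.det ≤ ((d * τ + J.card) / d) ^ d :=
  det_bounds_elliptical_potential_general d k τ hτ x hx V hV J hJ W hW
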